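/- Every element of the homotopy braid group B̂₃ can be written in the form b₁₂^α b₁₃^β b₂₃^γ z^δ λ, where α, β, γ, δ ∈ ℤ, z = [b₂₃, b₁₃], and λ belongs to the set Λ₃ = { e, σ₁, σ₂, σ₂σ₁, σ₁σ₂, σ₁σ₂σ₁ } of representatives of the cosets of the pure homotopy braid group P̂₃ in B̂₃. -/

import Mathlib

/-- The commutator `[x, y] = x⁻¹ y⁻¹ x y` used in the paper. -/
def pcomm {G : Type*} [Group G] (x y : G) : G := x⁻¹ * y⁻¹ * x * y

/-- The braid relation `σ₁σ₂σ₁ = σ₂σ₁σ₂` on two generators. -/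
def braidRel3 : Set (FreeGroup (Fin 2)) :=
  { FreeGroup.of 0 * FreeGroup.of 1 * FreeGroup.of 0 *
      (FreeGroup.of 1 * FreeGroup.of 0 * FreeGroup.of 1)⁻¹ }

/-- The braid group `B₃`. -/
abbrev B3 := PresentedGroup braidRel3

/-- The generator `σ₁` of `B₃`. -/
def s1 : B3 := PresentedGroup.of 0
/-- The generator `σ₂` of `B₃`. -/
def s2 : B3 := PresentedGroup.of 1
/-- `a₁₂ = σ₁²`. -/
def a12 : B3 := s1 ^ 2
/-- `a₁₃ = σ₂σ₁²σ₂⁻¹`. -/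
def a13 : B3 := s2 * s1 ^ 2 * s2⁻¹
/-- `a₂₃ = σ₂²`. -/
def a23 : B3 := s2 ^ 2

/-- The homotopy relations in `B₃`: `[a₁₃, g⁻¹a₁₃g]` and `[a₂₃, g⁻¹a₂₃g]` for `g`
in the subgroup generated by `a₁₃` and `a₂₃`. -/
def homotopyRels3 : Set B3 :=
  { x | ∃ g ∈ Subgroup.closure {a13, a23},
        x = pcomm a13 (g⁻¹ * a13 * g) ∨ x = pcomm a23 (g⁻¹ * a23 * g) }

/-- The homotopy braid group `B̂₃`. -/
abbrev HB3 := B3 ⧸ Subgroup.normalClosure homotopyRels3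

/-- The canonical projection `B₃ → B̂₃`. -/
def pr : B3 →* HB3 := QuotientGroup.mk' _

/-- The image of `σ₁` in `B̂₃`. -/
def t1 : HB3 := pr s1
/-- The image of `σ₂` in `B̂₃`. -/
def t2 : HB3 := pr s2
/-- The image `b₁₂` of `a₁₂` in `B̂₃`. -/
def b12 : HB3 := pr a12
/-- The image `b₁₃` of `a₁₃` in `B̂₃`. -/
def b13 : HB3 := pr a13
/-- The image `b₂₃` of `a₂₃` in `B̂₃`. -/
def b23 : HB3 := pr a23
/-- `z = [b₂₃, b₁₃]`. -/
def zz : HB3 := pcomm b23 b13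

/-!
`Δ² = σ₁σ₂σ₁σ₁σ₂σ₁ = b₁₂b₁₃b₂₃` is central and `σᵢ⁻¹ = Δ⁻² · (positive word)`, so a subset of `B̂₃`
containing `1` and closed under right multiplication by `σ₁`, `σ₂` and `Δ⁻²` is everything. Checking
the twelve products `λσᵢ` (`λ ∈ Λ₃`) shows that `P̂₃Λ₃` is such a subset. Inside `P̂₃` we have
`b₁₂ = Δ²b₂₃⁻¹b₁₃⁻¹`, so `P̂₃ = ⟨Δ²⟩⟨b₁₃, b₂₃⟩` and `Δ^{2α} = b₁₂^α (b₁₃b₂₃)^α`. Finally the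
homotopy relations say that `z` commutes with `b₁₃` and `b₂₃`, so `⟨b₁₃, b₂₃⟩` is a quotient of the
Heisenberg group and its elements are `b₁₃^β b₂₃^γ z^δ`.
-/

section Group

open Pointwise

variable {G : Type*} [Group G]

theorem pcomm_eq_one_iff {x y : G} : pcomm x y = 1 ↔ Commute x y := by
  rw [show pcomm x y = (y * x)⁻¹ * (x * y) by rw [pcomm]; group, inv_mul_eq_one, eq_comm,
    commute_iff_eq]

theorem map_pcomm {H : Type*} [Group H] (f : G →* H) (x y : G) :
    f (pcomm x y) = pcomm (f x) (f y) := by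
  simp [pcomm]

theorem semiconjBy_braid_left {a b : G} (h : a * b * a = b * a * b) :
    SemiconjBy (a * b * a) a b :=
  calc a * b * a * a = b * a * b * a := by rw [h]
    _ = b * (a * b * a) := by group

theorem semiconjBy_braid_right {a b : G} (h : a * b * a = b * a * b) :
    SemiconjBy (a * b * a) b a :=
  calc a * b * a * b = a * (b * a * b) := by group
    _ = a * (a * b * a) := by rw [h]

theorem commute_braid_sq_left {a b : G} (h : a * b * a = b * a * b) :
    Commute ((a * b * a) ^ 2) a := by
  rw [pow_two]
  exact (semiconjBy_braid_right h).mul_left (semiconjBy_braid_left h)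

theorem commute_braid_sq_right {a b : G} (h : a * b * a = b * a * b) :
    Commute ((a * b * a) ^ 2) b := by
  rw [h]
  exact commute_braid_sq_left h.symm

theorem Subgroup.normal_zpowers_of_forall_commute {c : G} (hc : ∀ g, Commute c g) :
    (Subgroup.zpowers c).Normal where
  conj_mem n hn g := by
    obtain ⟨k, rfl⟩ := Subgroup.mem_zpowers_iff.mp hn
    rw [← ((hc g).zpow_left k).eq, mul_inv_cancel_right]
    exact Subgroup.zpow_mem_zpowers c k

theorem Subgroup.mul_mem_coe_mul_of_forall {H : Subgroup G} {s : Set G} {g t : G}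
    (hg : g ∈ (H : Set G) * s) (ht : ∀ l ∈ s, l * t ∈ (H : Set G) * s) :
    g * t ∈ (H : Set G) * s := by
  obtain ⟨p, hp, l, hl, rfl⟩ := Set.mem_mul.1 hg
  obtain ⟨p', hp', l', hl', hlt⟩ := Set.mem_mul.1 (ht l hl)
  exact Set.mem_mul.2 ⟨p * p', H.mul_mem hp hp', l', hl', by rw [mul_assoc, hlt, mul_assoc]⟩

theorem exists_zpow_mul_zpow_mul_zpow_of_mem_closure_pair {x y z g : G}
    (hyx : x⁻¹ * y * x = y * z) (hzx : Commute z x) (hzy : Commute z y)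
    (hg : g ∈ Subgroup.closure {x, y}) : ∃ β γ δ : ℤ, g = x ^ β * y ^ γ * z ^ δ := by
  have conj_by_x_inv (γ : ℤ) : x⁻¹ * y ^ γ * x = y ^ γ * z ^ γ := by
    rw [← hzy.symm.mul_zpow, ← hyx]
    simpa using map_zpow (MulAut.conj x⁻¹) y γ
  have conj_by_x (γ : ℤ) : x * y ^ γ * x⁻¹ = y ^ γ * z ^ (-γ) :=
    calc x * y ^ γ * x⁻¹ = x * (y ^ γ * z ^ γ) * (z ^ (-γ) * x⁻¹) := by group
      _ = x * (x⁻¹ * y ^ γ * x) * (x⁻¹ * z ^ (-γ)) := by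
        rw [conj_by_x_inv, ((hzx.zpow_left (-γ)).inv_right).eq]
      _ = y ^ γ * z ^ (-γ) := by group
  have mul_x (β γ δ : ℤ) : x ^ β * y ^ γ * z ^ δ * x = x ^ (β + 1) * y ^ γ * z ^ (γ + δ) :=
    calc x ^ β * y ^ γ * z ^ δ * x = x ^ (β + 1) * (x⁻¹ * y ^ γ * x) * z ^ δ := by
          rw [mul_assoc _ (z ^ δ), (hzx.zpow_left δ).eq]; group
      _ = x ^ (β + 1) * y ^ γ * z ^ (γ + δ) := by rw [conj_by_x_inv]; group
  have mul_x_inv (β γ δ : ℤ) :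
      x ^ β * y ^ γ * z ^ δ * x⁻¹ = x ^ (β - 1) * y ^ γ * z ^ (-γ + δ) :=
    calc x ^ β * y ^ γ * z ^ δ * x⁻¹ = x ^ (β - 1) * (x * y ^ γ * x⁻¹) * z ^ δ := by
          rw [mul_assoc _ (z ^ δ), ((hzx.zpow_left δ).inv_right).eq]; group
      _ = x ^ (β - 1) * y ^ γ * z ^ (-γ + δ) := by rw [conj_by_x]; group
  have mul_y_zpow (β γ δ n : ℤ) :
      x ^ β * y ^ γ * z ^ δ * y ^ n = x ^ β * y ^ (γ + n) * z ^ δ := by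
    rw [mul_assoc _ (z ^ δ), ((hzy.zpow_left δ).zpow_right n).eq]; group
  induction hg using Subgroup.closure_induction_right with
  | one => exact ⟨0, 0, 0, by group⟩
  | mul_right _ _ s hs ih =>
    obtain ⟨β, γ, δ, rfl⟩ := ih
    rcases hs with rfl | rfl
    · exact ⟨_, _, _, mul_x β γ δ⟩
    · exact ⟨_, _, _, by simpa using mul_y_zpow β γ δ 1⟩
  | mul_inv_cancel _ _ s hs ih =>
    obtain ⟨β, γ, δ, rfl⟩ := ih
    rcases hs with rfl | rfl
    · exact ⟨_, _, _, mul_x_inv β γ δ⟩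
    · exact ⟨_, _, _, by simpa using mul_y_zpow β γ δ (-1)⟩

end Group

namespace HB3

open Subgroup Pointwise

theorem t1_mul_t2_mul_t1 : t1 * t2 * t1 = t2 * t1 * t2 := by
  have h : s1 * s2 * s1 = s2 * s1 * s2 := by
    have h := PresentedGroup.mk_eq_mk_of_mul_inv_mem (rels := braidRel3) (Set.mem_singleton _)
    simp only [map_mul] at h
    exact h
  have h := congrArg pr h
  simp only [map_mul] at h
  exact h

theorem closure_t1_t2 : closure ({t1, t2} : Set HB3) = ⊤ := by
  have h : ({t1, t2} : Set HB3) = pr '' Set.range PresentedGroup.of := by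
    simp [Set.range, Fin.exists_fin_two, Set.image, t1, t2, s1, s2, Set.insert_def, eq_comm]
  rw [h, ← MonoidHom.map_closure, PresentedGroup.closure_range_of, ← MonoidHom.range_eq_map,
    MonoidHom.range_eq_top]
  exact QuotientGroup.mk'_surjective _

theorem b12_eq : b12 = t1 * t1 := by simp [b12, a12, t1, pow_two]

theorem b13_eq : b13 = t2 * (t1 * t1) * t2⁻¹ := by simp [b13, a13, t1, t2, pow_two]

theorem b23_eq : b23 = t2 * t2 := by simp [b23, a23, t2, pow_two]

theorem pr_eq_one_of_mem_homotopyRels3 {x : B3} (hx : x ∈ homotopyRels3) : pr x = 1 :=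
  (QuotientGroup.eq_one_iff _).2 (subset_normalClosure hx)

theorem commute_b13_conj_b23 : Commute b13 (b23⁻¹ * b13 * b23) := by
  have h := pr_eq_one_of_mem_homotopyRels3
    ⟨a23, subset_closure (Set.mem_insert_of_mem _ rfl), .inl rfl⟩
  rwa [map_pcomm, map_mul, map_mul, map_inv, pcomm_eq_one_iff] at h

theorem commute_b23_conj_b13 : Commute b23 (b13⁻¹ * b23 * b13) := by
  have h := pr_eq_one_of_mem_homotopyRels3
    ⟨a13, subset_closure (Set.mem_insert _ _), .inr rfl⟩
  rwa [map_pcomm, map_mul, map_mul, map_inv, pcomm_eq_one_iff] at h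

theorem commute_zz_b13 : Commute zz b13 := by
  rw [show zz = (b23⁻¹ * b13 * b23)⁻¹ * b13 by rw [zz, pcomm]; group]
  exact commute_b13_conj_b23.symm.inv_left.mul_left (Commute.refl b13)

theorem commute_zz_b23 : Commute zz b23 := by
  rw [show zz = b23⁻¹ * (b13⁻¹ * b23 * b13) by rw [zz, pcomm]; group]
  exact (Commute.refl b23).inv_left.mul_left commute_b23_conj_b13.symm

theorem b13_inv_mul_b23_mul_b13 : b13⁻¹ * b23 * b13 = b23 * zz := by
  rw [zz, pcomm]; group

def fullTwist : HB3 := b12 * b13 * b23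

theorem fullTwist_eq : fullTwist = (t1 * t2 * t1) ^ 2 :=
  calc fullTwist = t1 * (t1 * t2 * t1 * t1) * t2 := by
        rw [fullTwist, b12_eq, b13_eq, b23_eq]; group
    _ = t1 * t2 * (t1 * t2 * t1 * t2) := by
        rw [(semiconjBy_braid_left t1_mul_t2_mul_t1).eq]; group
    _ = (t1 * t2 * t1) ^ 2 := by
        rw [(semiconjBy_braid_right t1_mul_t2_mul_t1).eq, pow_two]; group

theorem commute_fullTwist (g : HB3) : Commute fullTwist g := by
  have h : closure {t1, t2} ≤ centralizer {fullTwist} := by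
    rw [closure_le]
    rintro _ (rfl | rfl) <;> rw [SetLike.mem_coe, mem_centralizer_singleton_iff, fullTwist_eq]
    exacts [(commute_braid_sq_left t1_mul_t2_mul_t1).eq.symm,
      (commute_braid_sq_right t1_mul_t2_mul_t1).eq.symm]
  exact (mem_centralizer_singleton_iff.1 (h (closure_t1_t2 ▸ mem_top g))).symm

theorem t1_inv_eq : t1⁻¹ = fullTwist⁻¹ * (t1 * t2 * t1 * t1 * t2) := by
  rw [fullTwist_eq, pow_two]; group

theorem t2_inv_eq : t2⁻¹ = fullTwist⁻¹ * (t2 * t1 * t2 * t2 * t1) := by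
  rw [fullTwist_eq, pow_two, t1_mul_t2_mul_t1]; group

def pureSubgroup : Subgroup HB3 := closure {b12, b13, b23}

def cosetReps : Set HB3 := {1, t1, t2, t2 * t1, t1 * t2, t1 * t2 * t1}

theorem b12_mem_pureSubgroup : b12 ∈ pureSubgroup := subset_closure (by simp)

theorem b13_mem_pureSubgroup : b13 ∈ pureSubgroup := subset_closure (by simp)

theorem b23_mem_pureSubgroup : b23 ∈ pureSubgroup := subset_closure (by simp)

theorem fullTwist_mem_pureSubgroup : fullTwist ∈ pureSubgroup :=
  mul_mem (mul_mem b12_mem_pureSubgroup b13_mem_pureSubgroup) b23_mem_pureSubgroup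

theorem cosetReps_subset_pureSubgroup_mul :
    cosetReps ⊆ (pureSubgroup : Set HB3) * cosetReps :=
  Set.subset_mul_right _ pureSubgroup.one_mem

theorem cosetReps_mul_t1 :
    ∀ l ∈ cosetReps, l * t1 ∈ (pureSubgroup : Set HB3) * cosetReps := by
  rintro l (rfl | rfl | rfl | rfl | rfl | rfl)
  · apply cosetReps_subset_pureSubgroup_mul; simp [cosetReps]
  · exact Set.mem_mul.2
      ⟨b12, b12_mem_pureSubgroup, 1, by simp [cosetReps], by rw [b12_eq, mul_one]⟩
  · apply cosetReps_subset_pureSubgroup_mul; simp [cosetReps]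
  · exact Set.mem_mul.2
      ⟨b13, b13_mem_pureSubgroup, t2, by simp [cosetReps], by rw [b13_eq]; group⟩
  · apply cosetReps_subset_pureSubgroup_mul; simp [cosetReps]
  · refine Set.mem_mul.2 ⟨b23, b23_mem_pureSubgroup, t1 * t2, by simp [cosetReps], ?_⟩
    rw [(semiconjBy_braid_left t1_mul_t2_mul_t1).eq, b23_eq, t1_mul_t2_mul_t1]; group

theorem cosetReps_mul_t2 :
    ∀ l ∈ cosetReps, l * t2 ∈ (pureSubgroup : Set HB3) * cosetReps := by
  rintro l (rfl | rfl | rfl | rfl | rfl | rfl)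
  · apply cosetReps_subset_pureSubgroup_mul; simp [cosetReps]
  · apply cosetReps_subset_pureSubgroup_mul; simp [cosetReps]
  · exact Set.mem_mul.2
      ⟨b23, b23_mem_pureSubgroup, 1, by simp [cosetReps], by rw [b23_eq, mul_one]⟩
  · apply cosetReps_subset_pureSubgroup_mul; simp [cosetReps, ← t1_mul_t2_mul_t1]
  · refine Set.mem_mul.2 ⟨b23⁻¹ * b13 * b23, mul_mem (mul_mem (inv_mem b23_mem_pureSubgroup)
      b13_mem_pureSubgroup) b23_mem_pureSubgroup, t1, by simp [cosetReps], ?_⟩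
    calc b23⁻¹ * b13 * b23 * t1 = t2⁻¹ * (t1 * (t1 * t2 * t1)) := by
          rw [b13_eq, b23_eq]; group
      _ = t2⁻¹ * (t2 * t1 * t2 * t2) := by
        rw [← (semiconjBy_braid_right t1_mul_t2_mul_t1).eq, t1_mul_t2_mul_t1]
      _ = t1 * t2 * t2 := by group
  · refine Set.mem_mul.2 ⟨b12, b12_mem_pureSubgroup, t2 * t1, by simp [cosetReps], ?_⟩
    rw [(semiconjBy_braid_right t1_mul_t2_mul_t1).eq, b12_eq]; group

theorem mem_pureSubgroup_mul_cosetReps (g : HB3) :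
    g ∈ (pureSubgroup : Set HB3) * cosetReps := by
  have mul_t1 {g : HB3} (hg : g ∈ (pureSubgroup : Set HB3) * cosetReps) :=
    mul_mem_coe_mul_of_forall hg cosetReps_mul_t1
  have mul_t2 {g : HB3} (hg : g ∈ (pureSubgroup : Set HB3) * cosetReps) :=
    mul_mem_coe_mul_of_forall hg cosetReps_mul_t2
  have mul_fullTwist_inv {g : HB3} (hg : g ∈ (pureSubgroup : Set HB3) * cosetReps) :
      g * fullTwist⁻¹ ∈ (pureSubgroup : Set HB3) * cosetReps := by
    obtain ⟨p, hp, l, hl, rfl⟩ := Set.mem_mul.1 hg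
    refine Set.mem_mul.2
      ⟨p * fullTwist⁻¹, mul_mem hp (inv_mem fullTwist_mem_pureSubgroup), l, hl, ?_⟩
    rw [mul_assoc, (commute_fullTwist l).inv_left.eq, mul_assoc]
  induction closure_t1_t2 ▸ mem_top g using closure_induction_right with
  | one => apply cosetReps_subset_pureSubgroup_mul; simp [cosetReps]
  | mul_right _ _ t ht ih =>
    rcases ht with rfl | rfl
    exacts [mul_t1 ih, mul_t2 ih]
  | mul_inv_cancel _ _ t ht ih =>
    rcases ht with rfl | rfl
    · simpa only [t1_inv_eq, mul_assoc] using
        mul_t2 (mul_t1 (mul_t1 (mul_t2 (mul_t1 (mul_fullTwist_inv ih)))))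
    · simpa only [t2_inv_eq, mul_assoc] using
        mul_t1 (mul_t2 (mul_t2 (mul_t1 (mul_t2 (mul_fullTwist_inv ih)))))

theorem pureSubgroup_le_zpowers_fullTwist_sup :
    pureSubgroup ≤ zpowers fullTwist ⊔ closure {b13, b23} := by
  rw [pureSubgroup, closure_le]
  rintro _ (rfl | rfl | rfl)
  · rw [show b12 = fullTwist * (b23⁻¹ * b13⁻¹) by rw [fullTwist]; group]
    exact mul_mem_sup (mem_zpowers _) (mul_mem (inv_mem (subset_closure (by simp)))
      (inv_mem (subset_closure (by simp))))
  · exact mem_sup_right (subset_closure (by simp))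
  · exact mem_sup_right (subset_closure (by simp))

theorem exists_fullTwist_zpow_mul {p : HB3} (hp : p ∈ pureSubgroup) :
    ∃ α : ℤ, ∃ h ∈ closure {b13, b23}, fullTwist ^ α * h = p := by
  have := normal_zpowers_of_forall_commute commute_fullTwist
  obtain ⟨c, hc, h, hh, rfl⟩ :=
    mem_sup_of_normal_left.1 (pureSubgroup_le_zpowers_fullTwist_sup hp)
  obtain ⟨α, rfl⟩ := mem_zpowers_iff.1 hc
  exact ⟨α, h, hh, rfl⟩

theorem fullTwist_zpow (α : ℤ) : fullTwist ^ α = b12 ^ α * (b13 * b23) ^ α := by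
  have h := commute_fullTwist (b13 * b23)
  rw [fullTwist, mul_assoc] at h ⊢
  have hb12 : Commute b12 (b13 * b23) := by
    simpa only [mul_inv_cancel_right] using h.mul_left (Commute.refl (b13 * b23)).inv_left
  exact hb12.mul_zpow α

end HB3

open HB3

/-- Normal form in `B̂₃`: every element can be written as
`b₁₂^α b₁₃^β b₂₃^γ z^δ λ` with `λ ∈ Λ₃ = {e, σ₁, σ₂, σ₂σ₁, σ₁σ₂, σ₁σ₂σ₁}`. -/
theorem normal_form_HB3 (g : HB3) :
    ∃ (α β γ δ : ℤ) (lam : HB3),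
      lam ∈ ({1, t1, t2, t2 * t1, t1 * t2, t1 * t2 * t1} : Set HB3) ∧
      g = b12 ^ α * b13 ^ β * b23 ^ γ * zz ^ δ * lam := by
  obtain ⟨p, hp, l, hl, rfl⟩ := mem_pureSubgroup_mul_cosetReps g
  obtain ⟨α, h, hh, rfl⟩ := exists_fullTwist_zpow_mul hp
  have hmem : (b13 * b23) ^ α * h ∈ Subgroup.closure {b13, b23} :=
    mul_mem (zpow_mem (mul_mem (Subgroup.subset_closure (by simp))
      (Subgroup.subset_closure (by simp))) α) hh
  obtain ⟨β, γ, δ, hw⟩ := exists_zpow_mul_zpow_mul_zpow_of_mem_closure_pair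
    b13_inv_mul_b23_mul_b13 commute_zz_b13 commute_zz_b23 hmem
  refine ⟨α, β, γ, δ, l, hl, ?_⟩
  rw [fullTwist_zpow, mul_assoc (b12 ^ α), hw]
  simp only [mul_assoc]
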